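/- arXiv:1901.01419 — 4 statements merged into one kernel-verified Lean document; each statement's English description precedes it below -/
import Mathlib

section
/- The exponential tangent cone construction commutes with finite unions and arbitrary intersections: τ_1(W ∪ W') = τ_1(W) ∪ τ_1(W') and τ_1(⋂_i W_i) = ⋂_i τ_1(W_i) for subvarieties of (ℂ*)^n. -/
open MvPolynomial

/-- The coordinatewise exponential, landing in the units of `ℂ`. -/
noncomputable def expU (x : ℂ) : ℂˣ := Units.mk0 (Complex.exp x) (Complex.exp_ne_zero x)

/-- The exponential tangent cone at `1` of a subset `W ⊆ (ℂ*)ⁿ`: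
`τ₁(W) = { z ∈ ℂⁿ | exp (λ z) ∈ W for all λ ∈ ℂ }`. -/
noncomputable def tauOne {n : ℕ} (W : Set (Fin n → ℂˣ)) : Set (Fin n → ℂ) :=
  { z | ∀ l : ℂ, (fun i => expU (l * z i)) ∈ W }

/-- Evaluation of a polynomial along the exponential curve is entire. -/
lemma analytic_evalExp {n : ℕ} (z : Fin n → ℂ) (f : MvPolynomial (Fin n) ℂ) :
    AnalyticOnNhd ℂ (fun l : ℂ => MvPolynomial.eval (fun i => Complex.exp (l * z i)) f)
      Set.univ := by
  induction f using MvPolynomial.induction_on with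
  | C a => simpa using analyticOnNhd_const
  | add p q hp hq => simpa [map_add, Pi.add_def] using hp.add hq
  | mul_X p i hp =>
      have hexp : AnalyticOnNhd ℂ (fun l : ℂ => Complex.exp (l * z i)) Set.univ := by
        exact analyticOnNhd_cexp.comp (analyticOnNhd_id.mul analyticOnNhd_const)
          (Set.mapsTo_univ _ _)
      simpa [map_mul] using hp.mul hexp

/-- If the product of two entire functions vanishes identically, one factor vanishes
identically. -/
lemma entire_mul_eq_zero {g g' : ℂ → ℂ} (hg : AnalyticOnNhd ℂ g Set.univ)
    (hg' : AnalyticOnNhd ℂ g' Set.univ) (h : ∀ l, g l * g' l = 0) :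
    (∀ l, g l = 0) ∨ (∀ l, g' l = 0) := by
  by_contra hc
  push_neg at hc
  obtain ⟨⟨l₀, hl₀⟩, ⟨l₁, hl₁⟩⟩ := hc
  have hcont : ContinuousAt g l₀ := (hg l₀ (Set.mem_univ _)).continuousAt
  have hev : ∀ᶠ l in nhds l₀, g l ≠ 0 := hcont.eventually_ne hl₀
  have hev' : ∀ᶠ l in nhds l₀, g' l = 0 := by
    filter_upwards [hev] with l hl
    rcases mul_eq_zero.mp (h l) with h0 | h0
    · exact absurd h0 hl
    · exact h0
  have := hg'.eqOn_zero_of_preconnected_of_eventuallyEq_zero isPreconnected_univ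
    (Set.mem_univ l₀) hev'
  exact hl₁ (this (Set.mem_univ l₁))

/-- The exponential tangent cone commutes with finite unions (of Zariski closed subsets of
`(ℂ*)ⁿ`, i.e. zero loci of polynomial ideals) and with arbitrary intersections. -/
theorem tauOne_union_and_iInter (n : ℕ) :
    (∀ (F F' : Set (MvPolynomial (Fin n) ℂ)) (W W' : Set (Fin n → ℂˣ)),
      W = { z | ∀ f ∈ F, MvPolynomial.eval (fun i => (z i : ℂ)) f = 0 } →
      W' = { z | ∀ f ∈ F', MvPolynomial.eval (fun i => (z i : ℂ)) f = 0 } →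
      tauOne (W ∪ W') = tauOne W ∪ tauOne W') ∧
    (∀ (ι : Type) (Wf : ι → Set (Fin n → ℂˣ)),
      tauOne (⋂ i, Wf i) = ⋂ i, tauOne (Wf i)) := by
  constructor
  · intro F F' W W' hW hW'
    apply Set.Subset.antisymm
    · intro z hz
      by_contra hc
      simp only [Set.mem_union, not_or] at hc
      obtain ⟨h1, h2⟩ := hc
      simp only [tauOne, Set.mem_setOf_eq, not_forall] at h1 h2
      obtain ⟨l₀, hl₀⟩ := h1
      obtain ⟨l₁, hl₁⟩ := h2
      rw [hW] at hl₀
      rw [hW'] at hl₁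
      simp only [Set.mem_setOf_eq, not_forall] at hl₀ hl₁
      obtain ⟨f, hf, hf0⟩ := hl₀
      obtain ⟨f', hf', hf0'⟩ := hl₁
      set g : ℂ → ℂ := fun l => MvPolynomial.eval (fun i => Complex.exp (l * z i)) f with hg
      set g' : ℂ → ℂ := fun l => MvPolynomial.eval (fun i => Complex.exp (l * z i)) f' with hg'
      have hzero : ∀ l, g l * g' l = 0 := by
        intro l
        rcases hz l with hmem | hmem
        · rw [hW] at hmem
          have := hmem f hf
          simp only [expU, Units.val_mk0] at this
          rw [hg]; simp only []; rw [this, zero_mul]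
        · rw [hW'] at hmem
          have := hmem f' hf'
          simp only [expU, Units.val_mk0] at this
          rw [hg']; simp only []; rw [this, mul_zero]
      rcases entire_mul_eq_zero (analytic_evalExp z f) (analytic_evalExp z f') hzero with h | h
      · exact hf0 (h l₀)
      · exact hf0' (h l₁)
    · rintro z (hz | hz) l
      · exact Or.inl (hz l)
      · exact Or.inr (hz l)
  · intro ι Wf
    ext z
    simp only [tauOne, Set.mem_setOf_eq, Set.mem_iInter]
    exact ⟨fun h i l => h l i, fun h l i => h i l⟩
end

section
/- Let Δ(t_1,t_2) = (t_1 + t_2)(t_1 t_2 + 1) − 4 t_1 t_2 and let W = V(Δ) ⊂ (ℂ*)^2. Then the exponential tangent cone of W ∪ {1} at 1 is {0}, while the ordinary tangent cone at 1 is the zero set of x_1² + x_2², a union of two lines defined over ℂ but not over ℚ. -/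
open MvPolynomial

/-- `Δ(t₁,t₂) = (t₁ + t₂)(t₁t₂ + 1) - 4 t₁ t₂`. -/
noncomputable def Delta15 : MvPolynomial (Fin 2) ℂ :=
  (X 0 + X 1) * (X 0 * X 1 + 1) - C 4 * (X 0 * X 1)

/-- `W = V(Δ) ⊆ (ℂ*)²`. -/
noncomputable def W15 : Set (Fin 2 → ℂˣ) :=
  { z | MvPolynomial.eval (fun i => (z i : ℂ)) Delta15 = 0 }

/-- `Δ̃(x₁,x₂) = Δ(x₁+1, x₂+1)`. -/
noncomputable def Dtilde15 : MvPolynomial (Fin 2) ℂ :=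
  MvPolynomial.bind₁ (fun i : Fin 2 => X i + 1) Delta15


/-!
On the curve `V(Δ)` through `1`, substituting `tᵢ = exp (λ zᵢ)` turns `Δ` into the exponential
sum `e^{(2a+b)λ} + e^{aλ} + e^{(a+2b)λ} + e^{bλ} - 4e^{(a+b)λ}` with `(a, b) = (z₁, z₂)`.
If it vanishes identically, so do all its derivatives at `λ = 0`, i.e. the power sums
`(2a+b)ᵏ + aᵏ + (a+2b)ᵏ + bᵏ - 4(a+b)ᵏ`; the case `k = 2` gives `a² + b² = 0` and then `k = 4`
gives `a⁴ = 0`, so the only one-parameter subgroup of `(ℂ*)²` inside `W` is trivial.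
The ordinary tangent cone is read off `Δ(x₁+1, x₂+1) = x₁²x₂ + x₁x₂² + x₁² + x₂²`.
-/

open MvPolynomial Complex

section ExpSum

variable {ι : Type*} (s : Finset ι) (c a : ι → ℂ)

theorem hasDerivAt_sum_mul_exp (l : ℂ) :
    HasDerivAt (fun l => ∑ i ∈ s, c i * exp (l * a i))
      (∑ i ∈ s, c i * a i * exp (l * a i)) l := by
  refine HasDerivAt.fun_sum fun i _ => ?_
  have h := ((hasDerivAt_id l).mul_const (a i)).cexp.const_mul (c i)
  simpa [mul_comm, mul_left_comm, mul_assoc] using h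

variable {s c a}

theorem sum_mul_pow_eq_zero_of_sum_mul_exp_eq_zero
    (h : ∀ l, ∑ i ∈ s, c i * exp (l * a i) = 0) (k : ℕ) :
    ∑ i ∈ s, c i * a i ^ k = 0 := by
  have hderiv : ∀ k l, ∑ i ∈ s, c i * a i ^ k * exp (l * a i) = 0 := by
    intro k
    induction k with
    | zero => simpa using h
    | succ k ih =>
      intro l
      have hfun : (fun l => ∑ i ∈ s, c i * a i ^ k * exp (l * a i)) = 0 := funext ih
      have := (hasDerivAt_sum_mul_exp s (fun i => c i * a i ^ k) a l).deriv
      rw [hfun] at this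
      simpa [pow_succ, mul_assoc] using this.symm
  simpa using hderiv k 0

end ExpSum

theorem mem_tauOne_iff {n : ℕ} {f : MvPolynomial (Fin n) ℂ} {z : Fin n → ℂ} :
    z ∈ tauOne { u | eval (fun i => (u i : ℂ)) f = 0 } ↔
      ∀ l : ℂ, eval (fun i => exp (l * z i)) f = 0 :=
  Iff.rfl

theorem one_mem_W15 : (1 : Fin 2 → ℂˣ) ∈ W15 := by
  simp only [W15, Delta15, Set.mem_ofPred_eq, map_sub, map_add, map_mul, map_one, eval_X, eval_C]
  norm_num

theorem eval_exp_Delta15 (z : Fin 2 → ℂ) (l : ℂ) :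
    eval (fun i => exp (l * z i)) Delta15 =
      ∑ i : Fin 5, ![1, 1, 1, 1, -4] i *
        exp (l * ![2 * z 0 + z 1, z 0, z 0 + 2 * z 1, z 1, z 0 + z 1] i) := by
  simp only [Delta15, map_sub, map_add, map_mul, map_one, eval_X, eval_C, Fin.sum_univ_five,
    Matrix.cons_val, two_mul, mul_add, exp_add]
  ring

theorem eq_zero_of_forall_eval_exp_Delta15_eq_zero {z : Fin 2 → ℂ}
    (h : ∀ l : ℂ, eval (fun i => exp (l * z i)) Delta15 = 0) : z = 0 := by
  simp only [eval_exp_Delta15] at h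
  have p2 := sum_mul_pow_eq_zero_of_sum_mul_exp_eq_zero h 2
  have p4 := sum_mul_pow_eq_zero_of_sum_mul_exp_eq_zero h 4
  simp only [Fin.sum_univ_five, Matrix.cons_val] at p2 p4
  have hsq : z 0 ^ 2 + z 1 ^ 2 = 0 := by linear_combination p2 / 2
  have h0 : z 0 ^ 4 = 0 := by
    linear_combination p4 / 4 - (10 * z 0 ^ 2 + 24 * z 0 * z 1 + 14 * z 1 ^ 2) / 4 * hsq
  have h1 : z 1 ^ 4 = 0 := by linear_combination (z 1 ^ 2 - z 0 ^ 2) * hsq + h0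
  ext i
  fin_cases i <;> simpa using pow_eq_zero_iff (n := 4) (by norm_num) |>.mp ‹_›

theorem tauOne_W15 : tauOne W15 = {0} := by
  ext z
  refine ⟨fun hz => eq_zero_of_forall_eval_exp_Delta15_eq_zero (mem_tauOne_iff.mp hz), ?_⟩
  rintro rfl l
  convert one_mem_W15 using 1
  funext i
  ext
  simp [expU]

theorem Dtilde15_eq : Dtilde15 = X 0 * X 1 * (X 0 + X 1) + (X 0 ^ 2 + X 1 ^ 2) := by
  simp only [Dtilde15, Delta15, map_sub, map_add, map_mul, map_one, map_ofNat, bind₁_X_right]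
  ring

theorem homogeneousComponent_Dtilde15 (j : ℕ) :
    homogeneousComponent j Dtilde15 =
      (if j = 3 then X 0 * X 1 * (X 0 + X 1) else 0) +
        (if j = 2 then X 0 ^ 2 + X 1 ^ 2 else 0) := by
  have cubic : (X 0 * X 1 * (X 0 + X 1) : MvPolynomial (Fin 2) ℂ).IsHomogeneous 3 :=
    ((isHomogeneous_X ℂ 0).mul (isHomogeneous_X ℂ 1)).mul
      ((isHomogeneous_X ℂ 0).add (isHomogeneous_X ℂ 1))
  have quadratic : (X 0 ^ 2 + X 1 ^ 2 : MvPolynomial (Fin 2) ℂ).IsHomogeneous 2 :=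
    ((isHomogeneous_X ℂ 0).pow 2).add ((isHomogeneous_X ℂ 1).pow 2)
  rw [Dtilde15_eq, map_add, homogeneousComponent_of_mem cubic,
    homogeneousComponent_of_mem quadratic]

theorem Complex.sq_add_sq_eq_zero_iff (x y : ℂ) : x ^ 2 + y ^ 2 = 0 ↔ y = I * x ∨ y = -I * x := by
  have factor : x ^ 2 + y ^ 2 = (y - I * x) * (y + I * x) := by linear_combination x ^ 2 * I_sq
  rw [factor, mul_eq_zero, sub_eq_zero, add_eq_zero_iff_eq_neg, neg_mul]

theorem Rat.eq_zero_of_cast_sq_add_sq_eq_zero {q r : ℚ} (h : (q : ℂ) ^ 2 + (r : ℂ) ^ 2 = 0) :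
    q = 0 ∧ r = 0 := by
  have hℂ : (q : ℂ) * q + r * r = 0 := by simpa only [sq] using h
  exact mul_self_add_mul_self_eq_zero.mp (by exact_mod_cast hℂ)

/-- For `Δ = (t₁+t₂)(t₁t₂+1) - 4t₁t₂` and `W = V(Δ) ⊆ (ℂ*)²`:  the exponential tangent cone
of `W ∪ {1}` at `1` is `{0}`, while the initial form of `Δ(x₁+1, x₂+1)` is `x₁² + x₂²`, so
the ordinary tangent cone at `1` is the zero set of `x₁² + x₂²` — the union of the two lines
`x₂ = ± i x₁`, which are defined over `ℂ` but not over `ℚ` (they contain no nonzero rational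
point). -/
theorem example_no_one_finite_model :
    tauOne (W15 ∪ {1}) = {0} ∧
    (∀ j < 2, MvPolynomial.homogeneousComponent j Dtilde15 = 0) ∧
    MvPolynomial.homogeneousComponent 2 Dtilde15 = X 0 ^ 2 + X 1 ^ 2 ∧
    { z : Fin 2 → ℂ | z 0 ^ 2 + z 1 ^ 2 = 0 } =
      { z | z 1 = Complex.I * z 0 } ∪ { z | z 1 = -Complex.I * z 0 } ∧
    (∀ z : Fin 2 → ℂ, z 0 ^ 2 + z 1 ^ 2 = 0 → (∀ i, ∃ q : ℚ, z i = (q : ℂ)) → z = 0) := by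
  refine ⟨?_, fun j hj => ?_, ?_, ?_, ?_⟩
  · rw [Set.union_singleton, Set.insert_eq_of_mem one_mem_W15, tauOne_W15]
  · simp [homogeneousComponent_Dtilde15, show j ≠ 3 by omega, show j ≠ 2 by omega]
  · simp [homogeneousComponent_Dtilde15]
  · ext z
    exact Complex.sq_add_sq_eq_zero_iff (z 0) (z 1)
  · intro z hz hrat
    obtain ⟨q, hq⟩ := hrat 0
    obtain ⟨r, hr⟩ := hrat 1
    obtain ⟨rfl, rfl⟩ := Rat.eq_zero_of_cast_sq_add_sq_eq_zero (hq ▸ hr ▸ hz)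
    ext i
    fin_cases i <;> simp [hq, hr]
end

section
/- Let Δ(t_1,t_2,t_3) = t_1 t_2 + t_1 t_3 + t_2 t_3 − t_1 − t_2 − t_3 (the Alexander polynomial of the link 6³_1) and W = V(Δ) ⊂ (ℂ*)³. Then the exponential tangent cone τ_1(W ∪ {1}) is the union of the three lines {x_1 = 0, x_2 + x_3 = 0}, {x_2 = 0, x_1 + x_3 = 0}, {x_3 = 0, x_1 + x_2 = 0}, while the initial form of Δ(x_1+1, x_2+1, x_3+1) is the linear form x_1 + x_2 + x_3, so the tangent cone at 1 is the plane x_1 + x_2 + x_3 = 0. -/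
open MvPolynomial

/-- `Δ = t₁t₂ + t₁t₃ + t₂t₃ - t₁ - t₂ - t₃`, the Alexander polynomial of the link `6³₁`. -/
noncomputable def Delta16 : MvPolynomial (Fin 3) ℂ :=
  X 0 * X 1 + X 0 * X 2 + X 1 * X 2 - X 0 - X 1 - X 2

/-- `W = V(Δ) ⊆ (ℂ*)³`. -/
noncomputable def W16 : Set (Fin 3 → ℂˣ) :=
  { z | MvPolynomial.eval (fun i => (z i : ℂ)) Delta16 = 0 }

/-- `Δ̃(x₁,x₂,x₃) = Δ(x₁+1, x₂+1, x₃+1)`. -/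
noncomputable def Dtilde16 : MvPolynomial (Fin 3) ℂ :=
  MvPolynomial.bind₁ (fun i : Fin 3 => X i + 1) Delta16

/-- differentiation step for exponential sums -/
lemma exp_sum_deriv (c a : Fin 6 → ℂ)
    (h : ∀ l : ℂ, ∑ i, c i * Complex.exp (a i * l) = 0) :
    ∀ l : ℂ, ∑ i, (c i * a i) * Complex.exp (a i * l) = 0 := by
  intro l
  have hd : HasDerivAt (fun x : ℂ => ∑ i, c i * Complex.exp (a i * x))
      (∑ i, (c i * a i) * Complex.exp (a i * l)) l := by
    apply HasDerivAt.fun_sum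
    intro i _
    have h1 : HasDerivAt (fun x : ℂ => Complex.exp (a i * x))
        (Complex.exp (a i * l) * a i) l := by
      simpa using ((hasDerivAt_id l).const_mul (a i)).cexp
    have := h1.const_mul (c i)
    exact this.congr_deriv (by ring)
  have hfun : (fun x : ℂ => ∑ i, c i * Complex.exp (a i * x)) = fun _ => (0 : ℂ) :=
    funext h
  rw [hfun] at hd
  exact (hd.unique (hasDerivAt_const l 0))

lemma Dtilde_eq : Dtilde16 =
    (X 0 + X 1 + X 2) + (X 0 * X 1 + X 0 * X 2 + X 1 * X 2 : MvPolynomial (Fin 3) ℂ) := by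
  simp only [Dtilde16, Delta16, map_add, map_sub, map_mul, bind₁_X_right]
  ring

lemma homogMem : (X 0 + X 1 + X 2 : MvPolynomial (Fin 3) ℂ) ∈ homogeneousSubmodule (Fin 3) ℂ 1 ∧
    (X 0 * X 1 + X 0 * X 2 + X 1 * X 2 : MvPolynomial (Fin 3) ℂ) ∈ homogeneousSubmodule (Fin 3) ℂ 2 := by
  constructor
  · rw [mem_homogeneousSubmodule]
    exact ((isHomogeneous_X _ 0).add (isHomogeneous_X _ 1)).add (isHomogeneous_X _ 2)
  · rw [mem_homogeneousSubmodule]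
    exact (((isHomogeneous_X _ 0).mul (isHomogeneous_X _ 1)).add
      ((isHomogeneous_X _ 0).mul (isHomogeneous_X _ 2))).add
      ((isHomogeneous_X _ 1).mul (isHomogeneous_X _ 2))

lemma hcomp0 : MvPolynomial.homogeneousComponent 0 Dtilde16 = 0 := by
  rw [Dtilde_eq, map_add, homogeneousComponent_of_mem homogMem.1,
    homogeneousComponent_of_mem homogMem.2]
  norm_num

lemma hcomp1 : MvPolynomial.homogeneousComponent 1 Dtilde16 =
    (X 0 + X 1 + X 2 : MvPolynomial (Fin 3) ℂ) := by
  rw [Dtilde_eq, map_add, homogeneousComponent_of_mem homogMem.1,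
    homogeneousComponent_of_mem homogMem.2]
  norm_num

/-- For the Alexander polynomial `Δ = t₁t₂ + t₁t₃ + t₂t₃ - t₁ - t₂ - t₃` of the link `6³₁`
and `W = V(Δ) ⊆ (ℂ*)³`:  the exponential tangent cone `τ₁(W ∪ {1})` is the union of the
three lines `{x₁ = 0, x₂ + x₃ = 0}`, `{x₂ = 0, x₁ + x₃ = 0}`, `{x₃ = 0, x₁ + x₂ = 0}`, while
the initial form of `Δ(x₁+1, x₂+1, x₃+1)` is the linear form `x₁ + x₂ + x₃`, so the ordinary
tangent cone at `1` is the plane `x₁ + x₂ + x₃ = 0`. -/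
theorem link631_tangent_cones :
    tauOne (W16 ∪ {1}) =
      ({ z : Fin 3 → ℂ | z 0 = 0 ∧ z 1 + z 2 = 0 } ∪
       { z : Fin 3 → ℂ | z 1 = 0 ∧ z 0 + z 2 = 0 } ∪
       { z : Fin 3 → ℂ | z 2 = 0 ∧ z 0 + z 1 = 0 }) ∧
    MvPolynomial.homogeneousComponent 0 Dtilde16 = 0 ∧
    MvPolynomial.homogeneousComponent 1 Dtilde16 = X 0 + X 1 + X 2 := by
  refine ⟨?_, ?_, ?_⟩
  · ext z
    simp only [Set.mem_union, Set.mem_setOf_eq]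
    constructor
    · intro hz
      -- extract the identity ∑ c i exp (a i * l) = 0
      set a : Fin 6 → ℂ := ![z 0 + z 1, z 0 + z 2, z 1 + z 2, z 0, z 1, z 2] with ha
      set c : Fin 6 → ℂ := ![1, 1, 1, -1, -1, -1] with hc
      have key : ∀ l : ℂ, ∑ i, c i * Complex.exp (a i * l) = 0 := by
        intro l
        have := hz l
        have heval : Complex.exp (l * z 0) * Complex.exp (l * z 1)
            + Complex.exp (l * z 0) * Complex.exp (l * z 2)
            + Complex.exp (l * z 1) * Complex.exp (l * z 2)
            - Complex.exp (l * z 0) - Complex.exp (l * z 1) - Complex.exp (l * z 2) = 0 := by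
          rcases this with h | h
          · simpa [W16, Delta16, expU] using h
          · have h0 : ∀ i : Fin 3, Complex.exp (l * z i) = 1 := by
              intro i
              have : expU (l * z i) = 1 := congrFun h i
              simpa [expU, Units.ext_iff] using this
            simp [h0]
        have e01 : Complex.exp (l * z 0) * Complex.exp (l * z 1)
            = Complex.exp ((z 0 + z 1) * l) := by rw [← Complex.exp_add]; ring_nf
        have e02 : Complex.exp (l * z 0) * Complex.exp (l * z 2)
            = Complex.exp ((z 0 + z 2) * l) := by rw [← Complex.exp_add]; ring_nf
        have e12 : Complex.exp (l * z 1) * Complex.exp (l * z 2)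
            = Complex.exp ((z 1 + z 2) * l) := by rw [← Complex.exp_add]; ring_nf
        have em : ∀ i : Fin 3, Complex.exp (l * z i) = Complex.exp (z i * l) := by
          intro i; ring_nf
        rw [e01, e02, e12, em 0, em 1, em 2] at heval
        simp only [hc, ha, Fin.sum_univ_six]
        norm_num
        simp only [show (![1,1,1,-1,-1,-1] : Fin 6 → ℂ) 2 = 1 from rfl,
            show (![1,1,1,-1,-1,-1] : Fin 6 → ℂ) 3 = -1 from rfl,
            show (![1,1,1,-1,-1,-1] : Fin 6 → ℂ) 4 = -1 from rfl,
            show (![z 0 + z 1, z 0 + z 2, z 1 + z 2, z 0, z 1, z 2] : Fin 6 → ℂ) 2 = z 1 + z 2 from rfl,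
            show (![z 0 + z 1, z 0 + z 2, z 1 + z 2, z 0, z 1, z 2] : Fin 6 → ℂ) 3 = z 0 from rfl,
            show (![z 0 + z 1, z 0 + z 2, z 1 + z 2, z 0, z 1, z 2] : Fin 6 → ℂ) 4 = z 1 from rfl,
            show (![1,1,1,-1,-1,-1] : Fin 6 → ℂ) 5 = -1 from rfl,
          show (![z 0 + z 1, z 0 + z 2, z 1 + z 2, z 0, z 1, z 2] : Fin 6 → ℂ) 5 = z 2 from rfl]
        linear_combination heval
      have k1 := exp_sum_deriv c a key
      have k2 := exp_sum_deriv _ _ k1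
      have k3 := exp_sum_deriv _ _ k2
      have e1 : ∑ i, c i * a i = 0 := by
        have := k1 0
        simpa using this
      have e3 : ∑ i, ((c i * a i) * a i) * a i = 0 := by
        have := k3 0
        simpa [mul_assoc] using this
      simp only [hc, ha, Fin.sum_univ_six] at e1 e3
      norm_num at e1 e3
      simp only [show (![1,1,1,-1,-1,-1] : Fin 6 → ℂ) 2 = 1 from rfl,
            show (![1,1,1,-1,-1,-1] : Fin 6 → ℂ) 3 = -1 from rfl,
            show (![1,1,1,-1,-1,-1] : Fin 6 → ℂ) 4 = -1 from rfl,
            show (![z 0 + z 1, z 0 + z 2, z 1 + z 2, z 0, z 1, z 2] : Fin 6 → ℂ) 2 = z 1 + z 2 from rfl,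
            show (![z 0 + z 1, z 0 + z 2, z 1 + z 2, z 0, z 1, z 2] : Fin 6 → ℂ) 3 = z 0 from rfl,
            show (![z 0 + z 1, z 0 + z 2, z 1 + z 2, z 0, z 1, z 2] : Fin 6 → ℂ) 4 = z 1 from rfl,
            show (![1,1,1,-1,-1,-1] : Fin 6 → ℂ) 5 = -1 from rfl,
          show (![z 0 + z 1, z 0 + z 2, z 1 + z 2, z 0, z 1, z 2] : Fin 6 → ℂ) 5 = z 2 from rfl] at e1 e3
      have hs : z 0 + z 1 + z 2 = 0 := by linear_combination e1
      have hprod : z 0 * (z 1 * z 2) = 0 := by linear_combination ((z 0 + z 1 + z 2) ^ 2 * hs - e3) / 6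
      rcases mul_eq_zero.mp hprod with h0 | h12
      · exact Or.inl (Or.inl ⟨h0, by linear_combination hs - h0⟩)
      · rcases mul_eq_zero.mp h12 with h1 | h2
        · exact Or.inl (Or.inr ⟨h1, by linear_combination hs - h1⟩)
        · exact Or.inr ⟨h2, by linear_combination hs - h2⟩
    · intro hz l
      left
      simp only [W16, Delta16, Set.mem_setOf_eq, map_sub, map_add, map_mul, eval_X]
      simp only [expU, Units.val_mk0]
      rcases hz with (⟨h0, h12⟩ | ⟨h1, h02⟩) | ⟨h2, h01⟩
      · have h2' : z 2 = -z 1 := by linear_combination h12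
        rw [h0, h2']
        have hE := Complex.exp_ne_zero (l * z 1)
        simp [mul_neg, Complex.exp_neg]
      · have h2' : z 2 = -z 0 := by linear_combination h02
        rw [h1, h2']
        have hE := Complex.exp_ne_zero (l * z 0)
        simp [mul_neg, Complex.exp_neg]
        field_simp
        ring
      · have h1' : z 1 = -z 0 := by linear_combination h01
        rw [h2, h1']
        have hE := Complex.exp_ne_zero (l * z 0)
        simp [mul_neg, Complex.exp_neg]
        field_simp
        ring
  · exact hcomp0
  · exact hcomp1
end

section
/- Let A be the exterior algebra over ℂ on generators e_1,…,e_n (n ≥ 3, degree 1) modulo the relations e_i e_j + e_j e_k + e_k e_i = 0 for all distinct i,j,k, truncated above degree 2 (the cohomology ring of the complement of n circles pairwise linking once). Then the depth-1 resonance variety R^1_1(A) equals the hyperplane { x ∈ ℂ^n : Σ_i x_i = 0 }. -/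
/-- Let `A` be the (truncated) exterior algebra over `ℂ` on degree-one generators
`e₁, …, e_n` (`n ≥ 3`) modulo the relations `e_i e_j + e_j e_k + e_k e_i = 0` — the
cohomology ring of the complement of `n` circles pairwise linking once.  Concretely,
`A¹ = ℂⁿ` and the multiplication `A¹ × A¹ → A²` is the bilinear map
`(a·b)_k = a_k (Σ_j b_j) - (Σ_i a_i) b_k` (so `e_i e_j = f_i - f_j`, realizing `A²` as the
sum-zero hyperplane in `ℂⁿ`).  Then the depth-one resonance variety
`R¹₁(A) = { a | dim H¹(A, δ_a) ≥ 1 }`, with `H¹(A, δ_a) = ker(a ·) / span{a}`, equals the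
hyperplane `{ x ∈ ℂⁿ | Σ_i x_i = 0 }`. -/
theorem resonance_circle_link (n : ℕ) (hn : 3 ≤ n)
    (mul : (Fin n → ℂ) →ₗ[ℂ] (Fin n → ℂ) →ₗ[ℂ] (Fin n → ℂ))
    (hmul : ∀ a b : Fin n → ℂ,
      mul a b = fun k => a k * (∑ j, b j) - (∑ i, a i) * b k) :
    { a : Fin n → ℂ | 1 ≤ Module.finrank ℂ
        (↥(LinearMap.ker (mul a)) ⧸
          Submodule.comap (LinearMap.ker (mul a)).subtype (Submodule.span ℂ {a})) } =
      { x : Fin n → ℂ | ∑ i, x i = 0 } := by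
  ext a
  simp only [Set.mem_setOf_eq]
  constructor
  · -- if sum a ≠ 0, kernel = span {a}, quotient is trivial
    intro h
    by_contra hs
    have hker : LinearMap.ker (mul a) ≤ Submodule.span ℂ {a} := by
      intro x hx
      rw [LinearMap.mem_ker, hmul] at hx
      have hk : ∀ k, a k * (∑ j, x j) - (∑ i, a i) * x k = 0 := fun k => congrFun hx k
      refine Submodule.mem_span_singleton.mpr ⟨(∑ j, x j) / (∑ i, a i), ?_⟩
      funext k
      have h2 := hk k
      rw [Pi.smul_apply, smul_eq_mul, div_mul_eq_mul_div, div_eq_iff hs]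
      linear_combination h2
    have htop : Submodule.comap (LinearMap.ker (mul a)).subtype (Submodule.span ℂ {a}) = ⊤ :=
      Submodule.comap_subtype_eq_top.mpr hker
    have : Subsingleton (↥(LinearMap.ker (mul a)) ⧸
        Submodule.comap (LinearMap.ker (mul a)).subtype (Submodule.span ℂ {a})) :=
      Submodule.Quotient.subsingleton_iff.mpr htop
    rw [Module.finrank_zero_of_subsingleton] at h
    omega
  · intro hs
    -- construct an element of the kernel not in span {a}
    have h0 : (0 : ℕ) < n := by omega
    have h1 : (1 : ℕ) < n := by omega
    have h2 : (2 : ℕ) < n := by omega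
    set i0 : Fin n := ⟨0, h0⟩
    set i1 : Fin n := ⟨1, h1⟩
    set i2 : Fin n := ⟨2, h2⟩
    have hne01 : i0 ≠ i1 := by simp [i0, i1, Fin.ext_iff]
    have hne12 : i1 ≠ i2 := by simp [i1, i2, Fin.ext_iff]
    have hne02 : i0 ≠ i2 := by simp [i0, i2, Fin.ext_iff]
    set v01 : Fin n → ℂ := Pi.single i0 1 - Pi.single i1 1 with hv01
    set v12 : Fin n → ℂ := Pi.single i1 1 - Pi.single i2 1 with hv12
    have hsum01 : ∑ j, v01 j = 0 := by
      simp [hv01, Finset.sum_sub_distrib]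
    have hsum12 : ∑ j, v12 j = 0 := by
      simp [hv12, Finset.sum_sub_distrib]
    have hker : ∀ v : Fin n → ℂ, (∑ j, v j) = 0 → v ∈ LinearMap.ker (mul a) := by
      intro v hv
      rw [LinearMap.mem_ker, hmul]
      funext k
      simp [hv, hs]
    -- at least one of v01, v12 is not in span {a}
    have hnot : v01 ∉ Submodule.span ℂ {a} ∨ v12 ∉ Submodule.span ℂ {a} := by
      by_contra hc
      push_neg at hc
      obtain ⟨hc1, hc2⟩ := hc
      obtain ⟨c, hc⟩ := Submodule.mem_span_singleton.mp hc1
      obtain ⟨d, hd⟩ := Submodule.mem_span_singleton.mp hc2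
      have heq : d • v01 = c • v12 := by
        rw [← hc, ← hd, smul_smul, smul_smul, mul_comm]
      have hd0 : d = 0 := by
        have := congrFun heq i0
        simpa [hv01, hv12, Pi.single_apply, hne01, hne02, hne01.symm, hne02.symm, hne12, hne12.symm] using this
      have : v12 = 0 := by
        rw [← hd, hd0, zero_smul]
      have := congrFun this i1
      simp [hv12, Pi.single_apply, hne12, hne12.symm] at this
    obtain ⟨v, hvk, hvs⟩ : ∃ v, v ∈ LinearMap.ker (mul a) ∧ v ∉ Submodule.span ℂ {a} := by
      rcases hnot with h | h
      · exact ⟨v01, hker v01 hsum01, h⟩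
      · exact ⟨v12, hker v12 hsum12, h⟩
    have hne : Submodule.comap (LinearMap.ker (mul a)).subtype (Submodule.span ℂ {a}) ≠ ⊤ := by
      intro htop
      exact hvs (Submodule.comap_subtype_eq_top.mp htop hvk)
    have : Nontrivial (↥(LinearMap.ker (mul a)) ⧸
        Submodule.comap (LinearMap.ker (mul a)).subtype (Submodule.span ℂ {a})) :=
      Submodule.Quotient.nontrivial_iff.mpr hne
    exact Module.finrank_pos_iff.mpr this
end
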